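/- In 𝒜q the generators W_0 and W_1 satisfy the q-Serre relations: [W_0, [W_0, [W_0, W_1]_q]_{q⁻¹}] = 0 and [W_1, [W_1, [W_1, W_0]_q]_{q⁻¹}] = 0. -/

import Mathlib

/- STATEMENT 7: W_0 and W_1 satisfy the q-Serre relations in 𝒜q. -/

noncomputable section

namespace Alt

/-- The base field `F = ℚ(q)`. -/
abbrev F : Type := RatFunc ℚ

/-- The indeterminate `q`. -/
def q : F := RatFunc.X

/-- Commutator `[x,y] = xy - yx`. -/
def br {A : Type*} [Ring A] (x y : A) : A := x * y - y * x

/-- `q`-commutator `[x,y]_q = q·xy - q⁻¹·yx`. -/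
def qbr {A : Type*} [Ring A] [Algebra F A] (x y : A) : A :=
  q • (x * y) - q⁻¹ • (y * x)

/-- `q⁻¹`-commutator `[x,y]_{q⁻¹} = q⁻¹·xy - q·yx`. -/
def qbr' {A : Type*} [Ring A] [Algebra F A] (x y : A) : A :=
  q⁻¹ • (x * y) - q • (y * x)

/-- Generators of the algebra `𝒜q`: `wm k ↦ W_{-k}`, `wp k ↦ W_{k+1}`,
`g k ↦ G_{k+1}`, `gt k ↦ G̃_{k+1}`. -/
inductive Gen : Type
  | wm : ℕ → Gen
  | wp : ℕ → Gen
  | g : ℕ → Gen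
  | gt : ℕ → Gen

/-- The free `F`-algebra on the generators. -/
abbrev FA : Type := FreeAlgebra F Gen

/-- `W_{-k}` in the free algebra. -/
def fWm (k : ℕ) : FA := FreeAlgebra.ι F (Gen.wm k)
/-- `W_{k+1}` in the free algebra. -/
def fWp (k : ℕ) : FA := FreeAlgebra.ι F (Gen.wp k)
/-- `G_{k+1}` in the free algebra. -/
def fG (k : ℕ) : FA := FreeAlgebra.ι F (Gen.g k)
/-- `G̃_{k+1}` in the free algebra. -/
def fGt (k : ℕ) : FA := FreeAlgebra.ι F (Gen.gt k)

/-- The defining relations of `𝒜q` (with parameter `ρ`). -/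
inductive rel (ρ : F) : FA → FA → Prop
  | r1a (k : ℕ) : rel ρ (br (fWm 0) (fWp k)) ((q + q⁻¹)⁻¹ • (fGt k - fG k))
  | r1b (k : ℕ) : rel ρ (br (fWm k) (fWp 0)) ((q + q⁻¹)⁻¹ • (fGt k - fG k))
  | r2a (k : ℕ) : rel ρ (qbr (fWm 0) (fG k)) (ρ • fWm (k + 1))
  | r2b (k : ℕ) : rel ρ (qbr (fGt k) (fWm 0)) (ρ • fWm (k + 1))
  | r3a (k : ℕ) : rel ρ (qbr (fG k) (fWp 0)) (ρ • fWp (k + 1))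
  | r3b (k : ℕ) : rel ρ (qbr (fWp 0) (fGt k)) (ρ • fWp (k + 1))
  | r4a (k l : ℕ) : rel ρ (br (fWm k) (fWm l)) 0
  | r4b (k l : ℕ) : rel ρ (br (fWp k) (fWp l)) 0
  | r5 (k l : ℕ) : rel ρ (br (fWm k) (fWp l) + br (fWp k) (fWm l)) 0
  | r6 (k l : ℕ) : rel ρ (br (fWm k) (fG l) + br (fG k) (fWm l)) 0
  | r7 (k l : ℕ) : rel ρ (br (fWm k) (fGt l) + br (fGt k) (fWm l)) 0
  | r8 (k l : ℕ) : rel ρ (br (fWp k) (fG l) + br (fG k) (fWp l)) 0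
  | r9 (k l : ℕ) : rel ρ (br (fWp k) (fGt l) + br (fGt k) (fWp l)) 0
  | r10a (k l : ℕ) : rel ρ (br (fG k) (fG l)) 0
  | r10b (k l : ℕ) : rel ρ (br (fGt k) (fGt l)) 0
  | r11 (k l : ℕ) : rel ρ (br (fGt k) (fG l) + br (fG k) (fGt l)) 0

/-- The algebra `𝒜q`: the quotient of the free algebra by the two-sided ideal
generated by the defining relations. -/
abbrev Aq (ρ : F) : Type := RingQuot (rel ρ)

/-- The generator `W_{-k}` of `𝒜q`. -/
def Wm (ρ : F) (k : ℕ) : Aq ρ := RingQuot.mkAlgHom F (rel ρ) (fWm k)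
/-- The generator `W_{k+1}` of `𝒜q`. -/
def Wp (ρ : F) (k : ℕ) : Aq ρ := RingQuot.mkAlgHom F (rel ρ) (fWp k)
/-- The generator `G_{k+1}` of `𝒜q`. -/
def G (ρ : F) (k : ℕ) : Aq ρ := RingQuot.mkAlgHom F (rel ρ) (fG k)
/-- The generator `G̃_{k+1}` of `𝒜q`. -/
def Gt (ρ : F) (k : ℕ) : Aq ρ := RingQuot.mkAlgHom F (rel ρ) (fGt k)

/-!
Write `L`, `R` for left and right multiplication by `a` and `ad_p = L - p R`; these operators
commute, and the `q`-Serre expression of `a`, `b` is `ad_{q²} ad_{q⁻²} ad_1 b`. If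
`ad_1 b = c (h - g)`, `[a, g]_q = [h, a]_q = r w` and `a` commutes with `w`, then
`ad_{q⁻²} g = q⁻¹ r w`, `ad_{q²} h = -q r w` and `ad_p w = (1 - p) w a`, so both
`ad_{q²} ad_{q⁻²} h` and `ad_{q²} ad_{q⁻²} g` equal `-r (q - q⁻¹) w a` and the expression
vanishes. In `𝒜q` take `a = W_0`, `b = W_1`, `g = G_1`, `h = G̃_1`, `w = W_{-1}`, and
symmetrically `a = W_1`, `b = W_0`, `g = G̃_1`, `h = G_1`, `w = W_2`.
-/

lemma q_ne_zero : q ≠ 0 :=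
  RatFunc.X_ne_zero

def twistedAd {R A : Type*} [CommRing R] [Ring A] [Algebra R A] (p : R) (a : A) :
    A →ₗ[R] A :=
  LinearMap.mulLeft R a - p • LinearMap.mulRight R a

section Ring

variable {R A : Type*} [CommRing R] [Ring A] [Algebra R A]

lemma br_eq_neg_br (x y : A) : br x y = -br y x := by
  rw [br, br, neg_sub]

lemma map_br {Φ B : Type*} [Ring B] [FunLike Φ A B] [RingHomClass Φ A B] (f : Φ) (x y : A) :
    f (br x y) = br (f x) (f y) := by
  rw [br, br, map_sub, map_mul, map_mul]

lemma twistedAd_apply (p : R) (a x : A) : twistedAd p a x = a * x - p • (x * a) := rfl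

lemma br_eq_twistedAd (a x : A) : br a x = twistedAd (1 : R) a x := by
  rw [twistedAd_apply, one_smul, br]

lemma twistedAd_comm (p p' : R) (a x : A) :
    twistedAd p a (twistedAd p' a x) = twistedAd p' a (twistedAd p a x) := by
  simp only [twistedAd_apply, mul_sub, sub_mul, mul_smul_comm, smul_mul_assoc, smul_sub,
    smul_smul, mul_assoc, mul_comm p p']
  abel

lemma twistedAd_of_commute (p : R) {a w : A} (h : Commute a w) :
    twistedAd p a w = (1 - p) • (w * a) := by
  rw [twistedAd_apply, h.eq, sub_smul, one_smul]

end Ring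

section Serre

variable {A : Type*} [Ring A] [Algebra F A]

lemma qbr_eq_neg_qbr' (x y : A) : qbr x y = -qbr' y x := by
  rw [qbr, qbr', neg_sub]

lemma map_qbr {Φ B : Type*} [Ring B] [Algebra F B] [FunLike Φ A B] [AlgHomClass Φ F A B] (f : Φ)
    (x y : A) : f (qbr x y) = qbr (f x) (f y) := by
  rw [qbr, qbr, map_sub, map_smul, map_smul, map_mul, map_mul]

lemma qbr_eq_twistedAd (a x : A) : qbr a x = q • twistedAd (q⁻¹ ^ 2) a x := by
  rw [qbr, twistedAd_apply, smul_sub, smul_smul, sq, ← mul_assoc, mul_inv_cancel₀ q_ne_zero,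
    one_mul]

lemma qbr'_eq_twistedAd (a x : A) : qbr' a x = q⁻¹ • twistedAd (q ^ 2) a x := by
  rw [qbr', twistedAd_apply, smul_sub, smul_smul, sq, ← mul_assoc, inv_mul_cancel₀ q_ne_zero,
    one_mul]

lemma serre_eq_twistedAd (a b : A) :
    br a (qbr' a (qbr a b)) = twistedAd (q ^ 2) a (twistedAd (q⁻¹ ^ 2) a (br a b)) := by
  rw [qbr_eq_twistedAd, qbr'_eq_twistedAd, map_smul, smul_smul, inv_mul_cancel₀ q_ne_zero,
    one_smul, br_eq_twistedAd (R := F), twistedAd_comm, br_eq_twistedAd (R := F),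
    twistedAd_comm (1 : F)]

theorem serre_of_relations {a b g h w : A} {c r : F} (hab : br a b = c • (h - g))
    (hg : qbr a g = r • w) (hh : qbr h a = r • w) (hw : Commute a w) :
    br a (qbr' a (qbr a b)) = 0 := by
  have hq : q ≠ 0 := q_ne_zero
  have hg' : twistedAd (q⁻¹ ^ 2) a g = (q⁻¹ * r) • w := by
    rw [qbr_eq_twistedAd] at hg
    rw [mul_smul, ← hg, smul_smul, inv_mul_cancel₀ hq, one_smul]
  have hh' : twistedAd (q ^ 2) a h = (-(q * r)) • w := by
    rw [qbr_eq_neg_qbr', qbr'_eq_twistedAd, neg_eq_iff_eq_neg] at hh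
    rw [neg_smul, mul_smul, ← smul_neg, ← hh, smul_smul, mul_inv_cancel₀ hq, one_smul]
  rw [serre_eq_twistedAd, hab, map_smul, map_smul, map_sub, map_sub, twistedAd_comm _ _ _ h,
    hh', hg', map_smul, map_smul, twistedAd_of_commute _ hw, twistedAd_of_commute _ hw,
    smul_smul, smul_smul, ← sub_smul, smul_smul]
  convert zero_smul F (w * a)
  field_simp
  ring

end Serre

section Relations

variable (ρ : F)

lemma br_Wm_zero_Wp (k : ℕ) : br (Wm ρ 0) (Wp ρ k) = (q + q⁻¹)⁻¹ • (Gt ρ k - G ρ k) := by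
  have h := RingQuot.mkAlgHom_rel F (rel.r1a (ρ := ρ) k)
  simp only [map_br, map_smul, map_sub] at h
  exact h

lemma qbr_Wm_zero_G (k : ℕ) : qbr (Wm ρ 0) (G ρ k) = ρ • Wm ρ (k + 1) := by
  have h := RingQuot.mkAlgHom_rel F (rel.r2a (ρ := ρ) k)
  simp only [map_qbr, map_smul] at h
  exact h

lemma qbr_Gt_Wm_zero (k : ℕ) : qbr (Gt ρ k) (Wm ρ 0) = ρ • Wm ρ (k + 1) := by
  have h := RingQuot.mkAlgHom_rel F (rel.r2b (ρ := ρ) k)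
  simp only [map_qbr, map_smul] at h
  exact h

lemma qbr_G_Wp_zero (k : ℕ) : qbr (G ρ k) (Wp ρ 0) = ρ • Wp ρ (k + 1) := by
  have h := RingQuot.mkAlgHom_rel F (rel.r3a (ρ := ρ) k)
  simp only [map_qbr, map_smul] at h
  exact h

lemma qbr_Wp_zero_Gt (k : ℕ) : qbr (Wp ρ 0) (Gt ρ k) = ρ • Wp ρ (k + 1) := by
  have h := RingQuot.mkAlgHom_rel F (rel.r3b (ρ := ρ) k)
  simp only [map_qbr, map_smul] at h
  exact h

lemma commute_Wm (k l : ℕ) : Commute (Wm ρ k) (Wm ρ l) := by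
  have h := RingQuot.mkAlgHom_rel F (rel.r4a (ρ := ρ) k l)
  rw [map_br, map_zero, br, sub_eq_zero] at h
  exact h

lemma commute_Wp (k l : ℕ) : Commute (Wp ρ k) (Wp ρ l) := by
  have h := RingQuot.mkAlgHom_rel F (rel.r4b (ρ := ρ) k l)
  rw [map_br, map_zero, br, sub_eq_zero] at h
  exact h

end Relations

theorem statement7_general (ρ : F) :
    br (Wm ρ 0) (qbr' (Wm ρ 0) (qbr (Wm ρ 0) (Wp ρ 0))) = 0 ∧
    br (Wp ρ 0) (qbr' (Wp ρ 0) (qbr (Wp ρ 0) (Wm ρ 0))) = 0 := by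
  have hab : br (Wp ρ 0) (Wm ρ 0) = (q + q⁻¹)⁻¹ • (G ρ 0 - Gt ρ 0) := by
    rw [br_eq_neg_br, br_Wm_zero_Wp, smul_sub, smul_sub, neg_sub]
  exact ⟨serre_of_relations (br_Wm_zero_Wp ρ 0) (qbr_Wm_zero_G ρ 0) (qbr_Gt_Wm_zero ρ 0)
      (commute_Wm ρ 0 1),
    serre_of_relations hab (qbr_Wp_zero_Gt ρ 0) (qbr_G_Wp_zero ρ 0) (commute_Wp ρ 0 1)⟩

/-- In `𝒜q`, the generators `W_0 = W_{-0}` and `W_1` satisfy the `q`-Serre relations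
`[W_0, [W_0, [W_0, W_1]_q]_{q⁻¹}] = 0` and `[W_1, [W_1, [W_1, W_0]_q]_{q⁻¹}] = 0`. -/
theorem statement7 (ρ : F) (hρ : ρ ≠ 0) :
    br (Wm ρ 0) (qbr' (Wm ρ 0) (qbr (Wm ρ 0) (Wp ρ 0))) = 0 ∧
    br (Wp ρ 0) (qbr' (Wp ρ 0) (qbr (Wp ρ 0) (Wm ρ 0))) = 0 :=
  statement7_general ρ

end Alt
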